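/- For any three-player impartial game G, N ∉ o(G+G+G): the next player to move never has a winning strategy in a sum of three copies of a game. -/
import Mathlib


inductive IGame : Type where
  | mk : List IGame → IGame

namespace IGame

def opts : IGame → List IGame
  | mk l => l

theorem sizeOf_lt_of_mem {g G : IGame} (h : g ∈ G.opts) : sizeOf g < sizeOf G := by
  cases G with
  | mk l =>
    have h2 : g ∈ l := h
    have := List.sizeOf_lt_of_mem h2
    simp only [mk.sizeOf_spec]
    omega

def add : IGame → IGame → IGame
  | G, H =>
    mk ((G.opts.attach.map fun g => add g.1 H) ++ (H.opts.attach.map fun h => add G h.1))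
termination_by G H => sizeOf G + sizeOf H
decreasing_by
  · have := sizeOf_lt_of_mem g.2; omega
  · have := sizeOf_lt_of_mem h.2; omega

inductive Player : Type where
  | N | O | P
  deriving DecidableEq

def out : IGame → Player → Prop
  | G, .N => ∃ g : {x // x ∈ G.opts}, out g.1 .P
  | G, .O => ∀ g : {x // x ∈ G.opts}, out g.1 .N
  | G, .P => ∀ g : {x // x ∈ G.opts}, out g.1 .O
termination_by G _ => sizeOf G
decreasing_by
  all_goals exact sizeOf_lt_of_mem g.2

theorem out_N {G : IGame} : out G .N ↔ ∃ g ∈ G.opts, out g .P := by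
  rw [out]
  exact ⟨fun ⟨g, h⟩ => ⟨g.1, g.2, h⟩, fun ⟨g, hm, h⟩ => ⟨⟨g, hm⟩, h⟩⟩

theorem out_O {G : IGame} : out G .O ↔ ∀ g ∈ G.opts, out g .N := by
  rw [out]
  exact ⟨fun h g hm => h ⟨g, hm⟩, fun h g => h g.1 g.2⟩

theorem out_P {G : IGame} : out G .P ↔ ∀ g ∈ G.opts, out g .O := by
  rw [out]
  exact ⟨fun h g hm => h ⟨g, hm⟩, fun h g => h g.1 g.2⟩

def outcome (G : IGame) : Set Player := {p | out G p}

def nim : Nat → IGame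
  | 0 => mk []
  | n+1 => mk ((nim n).opts ++ [nim n])

end IGame


theorem mem_opts_add {x G H : IGame} :
    x ∈ (IGame.add G H).opts ↔
      (∃ g ∈ G.opts, x = IGame.add g H) ∨ (∃ h ∈ H.opts, x = IGame.add G h) := by
  rw [IGame.add]
  simp only [IGame.opts, List.mem_append, List.mem_map, List.mem_attach, true_and,
    Subtype.exists]
  constructor
  · rintro (⟨g, hg, rfl⟩ | ⟨h, hh, rfl⟩)
    · exact Or.inl ⟨g, hg, rfl⟩
    · exact Or.inr ⟨h, hh, rfl⟩
  · rintro (⟨g, hg, rfl⟩ | ⟨h, hh, rfl⟩)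
    · exact Or.inl ⟨g, hg, rfl⟩
    · exact Or.inr ⟨h, hh, rfl⟩

theorem add_mem_left {g G H : IGame} (h : g ∈ G.opts) :
    IGame.add g H ∈ (IGame.add G H).opts :=
  mem_opts_add.2 (Or.inl ⟨g, h, rfl⟩)

theorem add_mem_right {h G H : IGame} (hh : h ∈ H.opts) :
    IGame.add G h ∈ (IGame.add G H).opts :=
  mem_opts_add.2 (Or.inr ⟨h, hh, rfl⟩)

open IGame in
/-- The next player never has a winning strategy in `G+G+G`. -/
theorem no_N_in_triple (G : IGame) :
    Player.N ∉ IGame.outcome (IGame.add (IGame.add G G) G) := by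

  have key : ∀ n (G : IGame), sizeOf G ≤ n →
      ¬ IGame.out (IGame.add (IGame.add G G) G) .N := by
    intro n
    induction n with
    | zero => intro G hG; cases G with
      | mk l => simp [IGame.mk.sizeOf_spec] at hG
    | succ n ih =>
      intro G hG hN
      rw [IGame.out_N] at hN
      obtain ⟨x, hx, hxP⟩ := hN
      -- in each case, produce g ∈ G.opts with N ∈ o(g+g+g)
      have step : ∃ g ∈ G.opts, IGame.out (IGame.add (IGame.add g g) g) .N := by
        rcases mem_opts_add.1 hx with ⟨y, hy, rfl⟩ | ⟨g, hg, rfl⟩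
        · rcases mem_opts_add.1 hy with ⟨g, hg, rfl⟩ | ⟨g, hg, rfl⟩
          · -- x = (g+G)+G : move last copy, then middle copy
            refine ⟨g, hg, ?_⟩
            rw [IGame.out_P] at hxP
            have hO := hxP _ (add_mem_right hg)
            rw [IGame.out_O] at hO
            exact hO _ (add_mem_left (add_mem_right hg))
          · -- x = (G+g)+G
            refine ⟨g, hg, ?_⟩
            rw [IGame.out_P] at hxP
            have hO := hxP _ (add_mem_right hg)
            rw [IGame.out_O] at hO
            exact hO _ (add_mem_left (add_mem_left hg))
        · -- x = (G+G)+g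
          refine ⟨g, hg, ?_⟩
          rw [IGame.out_P] at hxP
          have hO := hxP _ (add_mem_left (add_mem_left hg))
          rw [IGame.out_O] at hO
          exact hO _ (add_mem_left (add_mem_right hg))
      obtain ⟨g, hg, hgN⟩ := step
      have := IGame.sizeOf_lt_of_mem hg
      exact ih g (by omega) hgN
  exact key (sizeOf G) G le_rfl
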